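/- arXiv:cs/0205035 — 7 statements merged into one kernel-verified Lean document; each statement's English description precedes it below -/
import Mathlib

section
/- For any r×c real payoff matrix M with entries in [0,1], any ε > 0, and any k ≥ ln(c)/(2ε²), there exists a multiset S of k rows (with repetition allowed) such that for every column j, the average (1/k)·Σ_{i∈S} M_{i,j} is at most v + ε, where v = min_p max_j Σ_i p(i) M_{i,j} is the value of the game (minimum over probability distributions p on rows). -/
/-!
The value of the game is attained at some mixed strategy `p`: the simplex is compact and
`q ↦ max_j ∑ i, q i * M i j` is lower semicontinuous. Sample `k` rows independently from `p`.
By Hoeffding's lemma the centred sum of column `j` is sub-Gaussian with variance proxy `k / 4`,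
so the potential `∑ j, exp (4ε · (∑ₘ M (S m) j - k ∑ i, p i * M i j))` has expectation at most
`c · exp (2kε²) ≤ exp (4kε²)`. Some sample does no worse than this expectation, and for it every
column average exceeds `∑ i, p i * M i j ≤ v` by at most `ε`. Averaging the potential, rather
than a union bound over the columns, is what makes the non-strict bound on `k` suffice.
-/

open Finset MeasureTheory ProbabilityTheory Real

section Sampling

variable {α : Type*} [MeasurableSpace α] {P : Measure α} [IsProbabilityMeasure P]

lemma hasSubgaussianMGF_sum_sub_integral_pi {X : α → ℝ} (hX : Measurable X)
    (hX01 : ∀ a, X a ∈ Set.Icc (0 : ℝ) 1) (k : ℕ) :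
    HasSubgaussianMGF (fun S : Fin k → α ↦ ∑ m, (X (S m) - P[X])) (k / 4)
      (Measure.pi fun _ ↦ P) := by
  have hHoeffding : HasSubgaussianMGF (fun a ↦ X a - P[X]) (1 / 4) P := by
    convert hasSubgaussianMGF_of_mem_Icc hX.aemeasurable (ae_of_all P hX01)
    norm_num
  convert HasSubgaussianMGF.sum_of_iIndepFun (s := univ) (c := fun _ ↦ 1 / 4)
    (iIndepFun_pi (μ := fun _ : Fin k ↦ P) fun _ ↦ (hX.sub_const P[X]).aemeasurable)
    fun m _ ↦ HasSubgaussianMGF.of_map (measurable_pi_apply m).aemeasurable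
      (by rwa [(measurePreserving_eval (fun _ : Fin k ↦ P) m).map_eq]) using 1
  simp [div_eq_mul_inv]

theorem exists_sample_average_le_integral_add {κ : Type*} [Fintype κ] {M : α → κ → ℝ}
    (hM : ∀ j, Measurable fun a ↦ M a j) (hM01 : ∀ a j, M a j ∈ Set.Icc (0 : ℝ) 1)
    {ε : ℝ} (hε : 0 < ε) {k : ℕ} (hk : 0 < k) (hkc : log (Fintype.card κ) ≤ 2 * ε ^ 2 * k) :
    ∃ S : Fin k → α, ∀ j, (1 / k : ℝ) * ∑ m, M (S m) j ≤ ∫ a, M a j ∂P + ε := by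
  -- `t = 4ε` minimises the Chernoff exponent `-t k ε + k t² / 8`.
  set t := 4 * ε
  set D : κ → (Fin k → α) → ℝ := fun j S ↦ ∑ m, (M (S m) j - ∫ a, M a j ∂P)
  have hsubG (j : κ) := hasSubgaussianMGF_sum_sub_integral_pi (P := P) (hM j) (hM01 · j) k
  obtain ⟨S, hS⟩ := exists_le_integral (μ := Measure.pi fun _ : Fin k ↦ P)
    (f := fun S ↦ ∑ j, exp (t * D j S))
    (integrable_finsetSum _ fun j _ ↦ (hsubG j).integrable_exp_mul t)
  have hpotential : ∑ j, exp (t * D j S) ≤ Fintype.card κ * exp (2 * ε ^ 2 * k) :=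
    calc _ ≤ _ := hS
      _ = ∑ j, mgf (D j) (Measure.pi fun _ ↦ P) t :=
        integral_finsetSum _ fun j _ ↦ (hsubG j).integrable_exp_mul t
      _ ≤ ∑ _j : κ, exp ((k / 4 : NNReal) * t ^ 2 / 2) := sum_le_sum fun j _ ↦ (hsubG j).mgf_le t
      _ = _ := by
        rw [sum_const, card_univ, nsmul_eq_mul]
        congr 2
        push_cast
        ring
  refine ⟨S, fun j ↦ ?_⟩
  have hcard : (0 : ℝ) < Fintype.card κ := by exact_mod_cast Fintype.card_pos_iff.mpr ⟨j⟩
  have hDj : D j S ≤ k * ε := by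
    have := (single_le_sum (fun j _ ↦ (exp_pos (t * D j S)).le) (mem_univ j)).trans hpotential
    rw [← exp_log hcard, ← exp_add, exp_le_exp] at this
    exact le_of_mul_le_mul_left (by linarith) (by positivity : 0 < t)
  have hk' : (0 : ℝ) < k := by exact_mod_cast hk
  simp only [D, sum_sub_distrib, sum_const, card_univ, Fintype.card_fin, nsmul_eq_mul] at hDj
  rw [one_div, inv_mul_le_iff₀ hk']
  linarith

end Sampling

section MixedStrategy

variable {ι : Type*} [Fintype ι] {p : ι → ℝ}

lemma exists_isMinOn_stdSimplex_iSup {κ : Type*} [Finite κ] [Nonempty ι] (M : ι → κ → ℝ) :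
    ∃ p ∈ stdSimplex ℝ ι, IsMinOn (fun q ↦ ⨆ j, ∑ i, q i * M i j) (stdSimplex ℝ ι) p := by
  classical
  have hlsc : LowerSemicontinuous fun q : ι → ℝ ↦ ⨆ j, ∑ i, q i * M i j :=
    lowerSemicontinuous_ciSup (fun _ ↦ (Set.finite_range _).bddAbove)
      fun j ↦ (by fun_prop : Continuous fun q : ι → ℝ ↦ ∑ i, q i * M i j).lowerSemicontinuous
  exact (hlsc.lowerSemicontinuousOn _).exists_isMinOn
    ⟨_, single_mem_stdSimplex ℝ (Classical.arbitrary ι)⟩ (isCompact_stdSimplex ℝ ι)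

noncomputable def PMF.ofStdSimplex (hp : p ∈ stdSimplex ℝ ι) : PMF ι :=
  PMF.ofFintype (fun i ↦ ENNReal.ofReal (p i)) <| by
    rw [← ENNReal.ofReal_sum_of_nonneg fun i _ ↦ hp.1 i, hp.2, ENNReal.ofReal_one]

lemma PMF.integral_ofStdSimplex [MeasurableSpace ι] [MeasurableSingletonClass ι]
    (hp : p ∈ stdSimplex ℝ ι) (f : ι → ℝ) :
    ∫ i, f i ∂(PMF.ofStdSimplex hp).toMeasure = ∑ i, p i * f i := by
  simp [PMF.integral_eq_sum, PMF.ofStdSimplex, ENNReal.toReal_ofReal (hp.1 _)]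

end MixedStrategy

theorem simple_minmax_row_general (r c : ℕ) (hr : 0 < r)
    (M : Fin r → Fin c → ℝ) (hM : ∀ i j, M i j ∈ Set.Icc (0 : ℝ) 1)
    (ε : ℝ) (hε : 0 < ε) (k : ℕ) (hk : 0 < k)
    (hkc : Real.log c / (2 * ε ^ 2) ≤ k) :
    ∃ S : Fin k → Fin r, ∀ j : Fin c,
      (1 / k : ℝ) * ∑ m, M (S m) j ≤
        (⨅ p : stdSimplex ℝ (Fin r), ⨆ j' : Fin c, ∑ i, p.1 i * M i j') + ε := by
  have : Nonempty (Fin r) := ⟨⟨0, hr⟩⟩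
  obtain ⟨p, hp, hpmin⟩ := exists_isMinOn_stdSimplex_iSup M
  have hlog : Real.log (Fintype.card (Fin c)) ≤ 2 * ε ^ 2 * k := by
    rwa [Fintype.card_fin, ← div_le_iff₀' (by positivity)]
  obtain ⟨S, hS⟩ := exists_sample_average_le_integral_add (P := (PMF.ofStdSimplex hp).toMeasure)
    (fun j ↦ measurable_of_finite _) hM hε hk hlog
  refine ⟨S, fun j ↦ (hS j).trans ?_⟩
  rw [PMF.integral_ofStdSimplex, hpmin.iInf_eq hp]
  gcongr
  exact le_ciSup (f := fun j ↦ ∑ i, p i * M i j) (Set.finite_range _).bddAbove j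

theorem simple_minmax_row (r c : ℕ) (hr : 0 < r) (hc : 0 < c)
    (M : Fin r → Fin c → ℝ) (hM : ∀ i j, M i j ∈ Set.Icc (0 : ℝ) 1)
    (ε : ℝ) (hε : 0 < ε) (k : ℕ) (hk : 0 < k)
    (hkc : Real.log c / (2 * ε ^ 2) ≤ k) :
    ∃ S : Fin k → Fin r, ∀ j : Fin c,
      (1 / k : ℝ) * ∑ m, M (S m) j ≤
        (⨅ p : stdSimplex ℝ (Fin r), ⨆ j' : Fin c, ∑ i, p.1 i * M i j') + ε :=
  simple_minmax_row_general r c hr M hM ε hε k hk hkc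
end

section
/- For any r×c real payoff matrix M with nonnegative entries, any ε > 0, and any k ≥ log_{1+ε}(c), there exists a set S of at most k rows such that for every column j, min_{i∈S} M_{i,j} ≤ (1+ε)·v, where v is the value of the game. -/
/-!
Let `p` be an optimal mixed strategy of the row player, so every column has expected payoff at
most `v` under `p`. By a strict Markov inequality, the rows paying more than `(1 + ε) v` in a
given column carry `p`-mass less than `1 / (1 + ε)`. Drawing `k` rows independently from `p`,
the expected number of columns left uncovered is therefore less than `c / (1 + ε) ^ k ≤ 1`, so
some draw covers every column.
-/

open Finset

section

variable {ι κ : Type*} [Fintype ι] [Fintype κ]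

theorem exists_mem_stdSimplex_forall_sum_mul_le_iInf_iSup [Nonempty ι] (M : ι → κ → ℝ) :
    ∃ p ∈ stdSimplex ℝ ι, ∀ j, ∑ i, p i * M i j ≤
      ⨅ q : stdSimplex ℝ ι, ⨆ j, ∑ i, q.1 i * M i j := by
  have hbdd (p : ι → ℝ) : BddAbove (Set.range fun j => ∑ i, p i * M i j) :=
    (Set.finite_range _).bddAbove
  have hlsc : LowerSemicontinuousOn (fun p : ι → ℝ => ⨆ j, ∑ i, p i * M i j) (stdSimplex ℝ ι) :=
    lowerSemicontinuousOn_ciSup (fun p _ => hbdd p) fun j =>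
      (continuous_finsetSum _ fun i _ => (continuous_apply i).mul continuous_const)
        |>.lowerSemicontinuous.lowerSemicontinuousOn _
  obtain ⟨p, hp, hmin⟩ := hlsc.exists_isMinOn (Set.nonempty_coe_sort.mp inferInstance)
    (isCompact_stdSimplex ℝ ι)
  exact ⟨p, hp, fun j => le_ciInf fun q => (le_ciSup (hbdd p) j).trans (hmin q.2)⟩

theorem sum_filter_lt_inv_of_sum_mul_le {p X : ι → ℝ} (hp : ∀ i, 0 ≤ p i) (hX : ∀ i, 0 ≤ X i)
    {a v : ℝ} (ha : 0 < a) (hv : ∑ i, p i * X i ≤ v) :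
    ∑ i with a * v < X i, p i < a⁻¹ := by
  obtain hb | hb := (sum_nonneg fun i (_ : i ∈ univ.filter (a * v < X ·)) => hp i).eq_or_lt
  · rw [← hb]; positivity
  obtain ⟨i₀, hi₀B, hi₀⟩ := (sum_pos_iff_of_nonneg fun i _ => hp i).mp hb
  have hmarkov : ∑ i with a * v < X i, p i * (a * v) < v := calc
    _ < ∑ i with a * v < X i, p i * X i :=
      sum_lt_sum (fun i hi => mul_le_mul_of_nonneg_left (mem_filter.mp hi).2.le (hp i))
        ⟨i₀, hi₀B, mul_lt_mul_of_pos_left (mem_filter.mp hi₀B).2 hi₀⟩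
    _ ≤ ∑ i, p i * X i :=
      sum_le_sum_of_subset_of_nonneg (filter_subset _ _) fun i _ _ => mul_nonneg (hp i) (hX i)
    _ ≤ v := hv
  rw [← sum_mul] at hmarkov
  have hv0 : 0 < v := lt_of_le_of_ne
    ((sum_nonneg fun i _ => mul_nonneg (hp i) (hX i)).trans hv) (by rintro rfl; simp at hmarkov)
  rw [← mul_one a⁻¹, lt_inv_mul_iff₀' ha]
  nlinarith

theorem sum_prod_mul_card_filter_forall_not (p : ι → ℝ) (P : ι → κ → Prop)
    [∀ i j, Decidable (P i j)] (k : ℕ) :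
    ∑ f : Fin k → ι, (∏ t, p (f t)) * (#{j | ∀ t, ¬P (f t) j} : ℝ) =
      ∑ j, (∑ i with ¬P i j, p i) ^ k := by
  simp_rw [sum_filter, Fintype.sum_pow, Finset.card_filter, Nat.cast_sum, mul_sum]
  rw [sum_comm]
  refine sum_congr rfl fun j _ => sum_congr rfl fun f _ => ?_
  push_cast
  rw [mul_boole, Fintype.prod_ite_zero]
  congr

theorem exists_card_le_forall_exists_of_sum_filter_not_lt [Nonempty κ] {p : ι → ℝ}
    (hp : p ∈ stdSimplex ℝ ι) (P : ι → κ → Prop) [∀ i j, Decidable (P i j)] {δ : ℝ} {k : ℕ}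
    (hk : k ≠ 0) (hbad : ∀ j, ∑ i with ¬P i j, p i < δ) (hδ : Fintype.card κ * δ ^ k ≤ 1) :
    ∃ S : Finset ι, #S ≤ k ∧ ∀ j, ∃ i ∈ S, P i j := by
  classical
  have hmean : ∑ f : Fin k → ι, (∏ t, p (f t)) * (#{j | ∀ t, ¬P (f t) j} : ℝ) <
      ∑ f : Fin k → ι, (∏ t, p (f t)) * 1 := calc
    _ = ∑ j, (∑ i with ¬P i j, p i) ^ k := sum_prod_mul_card_filter_forall_not p P k
    _ < ∑ _j : κ, δ ^ k := sum_lt_sum_of_nonempty univ_nonempty fun j _ =>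
      pow_lt_pow_left₀ (hbad j) (sum_nonneg fun i _ => hp.1 i) hk
    _ ≤ 1 := by simpa using hδ
    _ = ∑ f : Fin k → ι, (∏ t, p (f t)) * 1 := by simp [← Fintype.sum_pow, hp.2]
  obtain ⟨f, -, hf⟩ := exists_lt_of_sum_lt hmean
  have huncovered : #{j | ∀ t, ¬P (f t) j} < 1 := by
    exact_mod_cast lt_of_mul_lt_mul_left hf (prod_nonneg fun t _ => hp.1 (f t))
  refine ⟨univ.image f, card_image_le.trans (by simp), fun j => ?_⟩
  obtain ⟨t, ht⟩ : ∃ t, P (f t) j := by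
    simpa using filter_eq_empty_iff.mp (card_eq_zero.mp (Nat.lt_one_iff.mp huncovered))
      (mem_univ j)
  exact ⟨f t, mem_image_of_mem f (mem_univ t), ht⟩

end

theorem dovetailed_minmax_row (r c : ℕ) (hr : 0 < r) (hc : 0 < c)
    (M : Fin r → Fin c → ℝ) (hM : ∀ i j, 0 ≤ M i j)
    (ε : ℝ) (hε : 0 < ε) (k : ℕ) (hk : 0 < k)
    (hkc : Real.log c / Real.log (1 + ε) ≤ k) :
    ∃ S : Finset (Fin r), S.card ≤ k ∧ ∀ j : Fin c, ∃ i ∈ S,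
      M i j ≤ (1 + ε) * (⨅ p : stdSimplex ℝ (Fin r), ⨆ j' : Fin c, ∑ i', p.1 i' * M i' j') := by
  have : Nonempty (Fin r) := Fin.pos_iff_nonempty.mp hr
  have : Nonempty (Fin c) := Fin.pos_iff_nonempty.mp hc
  obtain ⟨p, hp, hpv⟩ := exists_mem_stdSimplex_forall_sum_mul_le_iInf_iSup M
  have hck : (c : ℝ) ≤ (1 + ε) ^ k :=
    (Real.le_pow_iff_log_le (by positivity) (by positivity)).2
      ((div_le_iff₀ (Real.log_pos (by linarith))).1 hkc)
  refine exists_card_le_forall_exists_of_sum_filter_not_lt hp _ hk.ne' (δ := (1 + ε)⁻¹)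
    (fun j => ?_) ?_
  · simpa only [not_le] using sum_filter_lt_inv_of_sum_mul_le hp.1 (hM · j) (by positivity) (hpv j)
  · rw [Fintype.card_fin, inv_pow, ← div_eq_mul_inv, div_le_one (by positivity)]
    exact hck
end

section
/- For any r×c matrix M with entries in [0,1], any ε > 0, and k ≥ log_{1+ε}(r), there exists a set T of at most k columns such that for every row i, max_{j∈T} M_{i,j} ≥ 1 − (1+ε)(1−v), where v is the value of the game. -/
open Finset

theorem dovetailed_minmax_col (r c : ℕ) (hr : 0 < r) (hc : 0 < c)
    (M : Fin r → Fin c → ℝ) (hM : ∀ i j, M i j ∈ Set.Icc (0 : ℝ) 1)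
    (ε : ℝ) (hε : 0 < ε) (k : ℕ) (hk : 0 < k)
    (hkr : Real.log r / Real.log (1 + ε) ≤ k) :
    ∃ T : Finset (Fin c), T.card ≤ k ∧ ∀ i : Fin r, ∃ j ∈ T,
      1 - (1 + ε) *
        (1 - (⨅ p : stdSimplex ℝ (Fin r), ⨆ j' : Fin c, ∑ i', p.1 i' * M i' j')) ≤ M i j := by
  haveI : NeZero r := ⟨hr.ne'⟩
  haveI : NeZero c := ⟨hc.ne'⟩
  set v : ℝ := ⨅ p : stdSimplex ℝ (Fin r), ⨆ j' : Fin c, ∑ i', p.1 i' * M i' j' with hv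
  set θ : ℝ := 1 - (1 + ε) * (1 - v) with hθ
  have j0 : Fin c := ⟨0, hc⟩
  -- key step lemma
  have key : ∀ R : Finset (Fin r), R.Nonempty → ∃ j : Fin c,
      (1 + ε) * ((R.filter (fun i => M i j < θ)).card : ℝ) < (R.card : ℝ) := by
    intro R hR
    have hRpos : (0 : ℝ) < (R.card : ℝ) := by exact_mod_cast hR.card_pos
    set p : Fin r → ℝ := fun i => if i ∈ R then ((R.card : ℝ))⁻¹ else 0 with hp_def
    have hsump : ∀ j : Fin c, ∑ i', p i' * M i' j
        = ((R.card : ℝ))⁻¹ * ∑ i ∈ R, M i j := by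
      intro j
      rw [Finset.mul_sum]
      rw [← Finset.sum_subset (Finset.subset_univ R)
        (f := fun i => p i * M i j)]
      · apply Finset.sum_congr rfl
        intro i hi
        simp [hp_def, hi]
      · intro i _ hi
        simp [hp_def, hi]
    have hp : p ∈ stdSimplex ℝ (Fin r) := by
      constructor
      · intro i
        simp only [hp_def]
        split <;> positivity
      · have : ∑ i, p i = ∑ i ∈ R, ((R.card : ℝ))⁻¹ := by
          rw [← Finset.sum_subset (Finset.subset_univ R) (f := p)]
          · exact Finset.sum_congr rfl fun i hi => by simp [hp_def, hi]
          · intro i _ hi; simp [hp_def, hi]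
        rw [this, Finset.sum_const, nsmul_eq_mul, mul_inv_cancel₀ hRpos.ne']
    -- v is at most the sup for p
    have hbdd : BddBelow (Set.range fun q : stdSimplex ℝ (Fin r) =>
        ⨆ j' : Fin c, ∑ i', q.1 i' * M i' j') := by
      refine ⟨0, ?_⟩
      rintro x ⟨q, rfl⟩
      dsimp only
      have h0 : (0 : ℝ) ≤ ∑ i', q.1 i' * M i' j0 := by
        apply Finset.sum_nonneg
        intro i _
        exact mul_nonneg (q.2.1 i) (hM i j0).1
      exact h0.trans (le_ciSup (f := fun j' : Fin c => ∑ i', q.1 i' * M i' j')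
        (Set.Finite.bddAbove (Set.finite_range _)) j0)
    obtain ⟨j, hj⟩ := Finite.exists_max (fun j => ∑ i', p i' * M i' j)
    have hvj : v ≤ ∑ i', p i' * M i' j := by
      refine le_trans (ciInf_le hbdd ⟨p, hp⟩) (ciSup_le hj)
    rw [hsump j] at hvj
    have hsumM : v * (R.card : ℝ) ≤ ∑ i ∈ R, M i j := by
      rw [inv_mul_eq_div, le_div_iff₀ hRpos] at hvj
      linarith [hvj]
    have hsumM1 : ∑ i ∈ R, M i j ≤ (R.card : ℝ) := by
      calc ∑ i ∈ R, M i j ≤ ∑ _i ∈ R, (1 : ℝ) :=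
            Finset.sum_le_sum (fun i _ => (hM i j).2)
        _ = (R.card : ℝ) := by simp
    have hv1 : v ≤ 1 := by
      have := hsumM.trans hsumM1
      nlinarith
    refine ⟨j, ?_⟩
    set B := R.filter (fun i => M i j < θ) with hB
    rcases B.eq_empty_or_nonempty with hBe | hBne
    · rw [hBe]; simpa using hRpos
    · have hlt : (B.card : ℝ) * ((1 + ε) * (1 - v)) < ∑ i ∈ B, (1 - M i j) := by
        calc (B.card : ℝ) * ((1 + ε) * (1 - v))
            = ∑ _i ∈ B, ((1 + ε) * (1 - v)) := by
              rw [Finset.sum_const, nsmul_eq_mul]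
          _ < ∑ i ∈ B, (1 - M i j) := by
              refine Finset.sum_lt_sum_of_nonempty hBne ?_
              intro i hi
              have h2 : M i j < θ := (Finset.mem_filter.mp hi).2
              rw [hθ] at h2; linarith
      have hBR : ∑ i ∈ B, (1 - M i j) ≤ ∑ i ∈ R, (1 - M i j) := by
        apply Finset.sum_le_sum_of_subset_of_nonneg (Finset.filter_subset _ _)
        intro i _ _
        linarith [(hM i j).2]
      have hRsum : ∑ i ∈ R, (1 - M i j) ≤ (1 - v) * (R.card : ℝ) := by
        rw [Finset.sum_sub_distrib, Finset.sum_const, nsmul_eq_mul]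
        nlinarith
      have hmain : (B.card : ℝ) * ((1 + ε) * (1 - v)) < (1 - v) * (R.card : ℝ) :=
        lt_of_lt_of_le hlt (hBR.trans hRsum)
      rcases eq_or_lt_of_le hv1 with hveq | hvlt
      · rw [hveq] at hmain
        norm_num at hmain
      · have h1v : (0 : ℝ) < 1 - v := by linarith
        nlinarith
  -- pick a column for each set of rows
  let pick : Finset (Fin r) → Fin c := fun R =>
    if h : R.Nonempty then (key R h).choose else j0
  have hpick : ∀ (R : Finset (Fin r)) (h : R.Nonempty),
      (1 + ε) * ((R.filter (fun i => M i (pick R) < θ)).card : ℝ) < (R.card : ℝ) := by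
    intro R h
    have : pick R = (key R h).choose := by simp [pick, h]
    rw [this]
    exact (key R h).choose_spec
  -- iterate
  let S : ℕ → Finset (Fin r) := fun n =>
    Nat.rec Finset.univ (fun _ R => R.filter (fun i => M i (pick R) < θ)) n
  have hS0 : S 0 = Finset.univ := rfl
  have hSsucc : ∀ n, S (n + 1) = (S n).filter (fun i => M i (pick (S n)) < θ) := fun n => rfl
  have hSsub : ∀ n, S (n + 1) ⊆ S n := by
    intro n; rw [hSsucc]; exact Finset.filter_subset _ _
  have hSmono : ∀ m n, m ≤ n → S n ⊆ S m := by
    intro m n h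
    induction n with
    | zero => simp_all
    | succ n ih =>
      rcases Nat.lt_or_ge m (n + 1) with h' | h'
      · exact (hSsub n).trans (ih (Nat.lt_succ_iff.mp h'))
      · have : m = n + 1 := le_antisymm h h'
        subst this; exact Finset.Subset.refl _
  have hε1 : (0 : ℝ) < 1 + ε := by linarith
  -- if S k nonempty, derive contradiction
  have hSk : S k = ∅ := by
    rcases (S k).eq_empty_or_nonempty with hemp | hne'
    · exact hemp
    exfalso
    have hallne : ∀ t ≤ k, (S t).Nonempty := by
      intro t ht
      obtain ⟨x, hx⟩ := hne'
      exact ⟨x, hSmono t k ht hx⟩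
    have hstep : ∀ t < k, (1 + ε) ^ (t + 1) * ((S (t + 1)).card : ℝ)
        < (1 + ε) ^ t * ((S t).card : ℝ) := by
      intro t ht
      have h1 := hpick (S t) (hallne t ht.le)
      rw [← hSsucc] at h1
      have hp2 : (0 : ℝ) < (1 + ε) ^ t := pow_pos hε1 t
      calc (1 + ε) ^ (t + 1) * ((S (t + 1)).card : ℝ)
          = (1 + ε) ^ t * ((1 + ε) * ((S (t + 1)).card : ℝ)) := by ring
        _ < (1 + ε) ^ t * ((S t).card : ℝ) := by
            exact mul_lt_mul_of_pos_left h1 hp2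
    have hchain : ∀ t, 1 ≤ t → t ≤ k →
        (1 + ε) ^ t * ((S t).card : ℝ) < (r : ℝ) := by
      intro t h1t htk
      induction t with
      | zero => omega
      | succ t ih =>
        rcases Nat.eq_zero_or_pos t with h0 | hpos
        · subst h0
          have := hstep 0 (by omega)
          simpa [hS0] using this
        · exact (hstep t (by omega)).trans (ih hpos (by omega))
    have hkbound := hchain k hk (le_refl k)
    have hcard : (1 : ℝ) ≤ ((S k).card : ℝ) := by
      exact_mod_cast hne'.card_pos
    have hrk : (r : ℝ) ≤ (1 + ε) ^ k := by
      have hlog : Real.log r ≤ k * Real.log (1 + ε) := by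
        have hlpos : 0 < Real.log (1 + ε) := Real.log_pos (by linarith)
        rw [div_le_iff₀ hlpos] at hkr
        linarith
      rw [← Real.log_pow] at hlog
      have hr0 : (0 : ℝ) < (r : ℝ) := by exact_mod_cast hr
      exact (Real.log_le_log_iff hr0 (pow_pos hε1 k)).mp hlog
    nlinarith [pow_pos hε1 k]
  -- build T
  refine ⟨(Finset.range k).image (fun t => pick (S t)), ?_, ?_⟩
  · exact (Finset.card_image_le).trans (by simp)
  · intro i
    have hik : i ∉ S k := by rw [hSk]; exact Finset.notMem_empty i
    have hfind : ∀ m, i ∉ S m → ∃ t < m, i ∈ S t ∧ i ∉ S (t + 1) := by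
      intro m
      induction m with
      | zero => intro h; exact absurd (by rw [hS0]; exact Finset.mem_univ i) h
      | succ m ih =>
        intro h
        rcases em (i ∈ S m) with him | him
        · exact ⟨m, Nat.lt_succ_self m, him, h⟩
        · obtain ⟨t, ht, h1, h2⟩ := ih him
          exact ⟨t, ht.trans (Nat.lt_succ_self m), h1, h2⟩
    obtain ⟨t, htk, hit, hit'⟩ := hfind k hik
    refine ⟨pick (S t), Finset.mem_image.mpr ⟨t, Finset.mem_range.mpr htk, rfl⟩, ?_⟩
    rw [hSsucc, Finset.mem_filter] at hit'
    push_neg at hit'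
    exact hit' hit
end

section
/- Let G : P × I → {0,1} be a 0/1 payoff function on finite sets P (programs) and I (inputs), and let v be the value of the associated zero-sum game (row player P minimizing). For any ε > 0 and k > ln|I|/(2ε²), there exists a multiset of k programs such that for every input j, the fraction of programs in the multiset with G(i,j) = 1 is less than v + ε. -/
/-!
Take an optimal mixed strategy `p`: against every input `j` it errs with probability
`q_j ≤ v`. Draw `k` programs independently from `p`. By Hoeffding's inequality the empirical
error rate on `j` reaches `q_j + ε` with probability at most `exp (-2 k ε²)`, and since
`|I| exp (-2 k ε²) < 1`, the union bound over the inputs leaves a sample that is good on all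
of them.
-/

open Finset MeasureTheory ProbabilityTheory

lemma exists_mem_stdSimplex_forall_le_iInf_iSup {P I : Type*} [Fintype P] [Finite I]
    [Nonempty P] (G : P → I → ℝ) :
    ∃ p : stdSimplex ℝ P, ∀ j,
      ∑ i, p.1 i * G i j ≤ ⨅ p : stdSimplex ℝ P, ⨆ j', ∑ i, p.1 i * G i j' := by
  have hlsc : LowerSemicontinuous fun p : P → ℝ ↦ ⨆ j', ∑ i, p i * G i j' :=
    lowerSemicontinuous_ciSup (fun _ ↦ (Set.finite_range _).bddAbove) fun j' ↦
      (continuous_finsetSum _ fun i _ ↦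
        (continuous_apply i).mul continuous_const).lowerSemicontinuous
  obtain ⟨p, hp, hmin⟩ := LowerSemicontinuousOn.exists_isMinOn
    (Set.nonempty_coe_sort.1 inferInstance) (isCompact_stdSimplex ℝ P)
    (hlsc.lowerSemicontinuousOn _)
  refine ⟨⟨p, hp⟩, fun j ↦ ?_⟩
  calc ∑ i, p i * G i j ≤ ⨆ j', ∑ i, p i * G i j' :=
      le_ciSup (Set.finite_range fun j' ↦ ∑ i, p i * G i j').bddAbove j
    _ ≤ _ := le_ciInf fun p' ↦ hmin p'.2

namespace PMF

variable {P : Type*} [Fintype P]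

noncomputable def ofStdSimplex_s7 (p : stdSimplex ℝ P) : PMF P :=
  ofFintype (fun i ↦ ENNReal.ofReal (p.1 i)) <| by
    rw [← ENNReal.ofReal_sum_of_nonneg fun i _ ↦ p.2.1 i, p.2.2, ENNReal.ofReal_one]

lemma integral_ofStdSimplex_s7 [MeasurableSpace P] [MeasurableSingletonClass P]
    (p : stdSimplex ℝ P) (f : P → ℝ) :
    ∫ i, f i ∂(ofStdSimplex_s7 p).toMeasure = ∑ i, p.1 i * f i := by
  simp [ofStdSimplex_s7, integral_eq_sum, ENNReal.toReal_ofReal (p.2.1 _)]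

end PMF

lemma measureReal_pi_integral_add_le_mean_le {α : Type*} [MeasurableSpace α]
    {μ : Measure α} [IsProbabilityMeasure μ] {f : α → ℝ} (hf : Measurable f)
    (hf01 : ∀ x, f x ∈ Set.Icc 0 1) {k : ℕ} (hk : 0 < k) {ε : ℝ} (hε : 0 ≤ ε) :
    (Measure.pi fun _ : Fin k ↦ μ).real
        {ω | (∫ x, f x ∂μ) + ε ≤ (1 / k : ℝ) * ∑ m, f (ω m)} ≤
      Real.exp (-(2 * k * ε ^ 2)) := by
  set ν := Measure.pi fun _ : Fin k ↦ μ
  have hsubG : ∀ m ∈ (univ : Finset (Fin k)),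
      HasSubgaussianMGF (fun ω ↦ f (ω m) - ∫ x, f x ∂μ) (4⁻¹) ν := by
    intro m _
    have h := hasSubgaussianMGF_of_mem_Icc (μ := ν) (X := fun ω ↦ f (ω m))
      (hf.comp (measurable_pi_apply m)).aemeasurable (ae_of_all _ fun ω ↦ hf01 (ω m))
    rw [integral_comp_eval hf.aestronglyMeasurable] at h
    convert h using 1
    norm_num
  have hindep : iIndepFun (fun m ω ↦ f (ω m) - ∫ x, f x ∂μ) ν :=
    iIndepFun_pi (X := fun _ x ↦ f x - ∫ x, f x ∂μ) fun _ ↦ (hf.sub_const _).aemeasurable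
  have hk' : (0 : ℝ) < k := Nat.cast_pos.2 hk
  calc ν.real {ω | (∫ x, f x ∂μ) + ε ≤ (1 / k : ℝ) * ∑ m, f (ω m)}
      = ν.real {ω | k * ε ≤ ∑ m, (f (ω m) - ∫ x, f x ∂μ)} := by
        congr with ω
        rw [sum_sub_distrib, sum_const, card_univ, Fintype.card_fin, nsmul_eq_mul, one_div,
          ← div_eq_inv_mul, le_div_iff₀ hk']
        constructor <;> intro <;> linarith
    _ ≤ Real.exp (-(k * ε) ^ 2 / (2 * ((∑ _m : Fin k, 4⁻¹ : NNReal) : ℝ))) :=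
        HasSubgaussianMGF.measure_sum_ge_le_of_iIndepFun hindep hsubG (by positivity)
    _ = Real.exp (-(2 * k * ε ^ 2)) := by
        simp only [sum_const, card_univ, Fintype.card_fin, nsmul_eq_mul]
        push_cast
        field_simp
        ring_nf

lemma exists_forall_notMem_of_sum_measureReal_lt_one {Ω ι : Type*} [MeasurableSpace Ω]
    [Fintype ι] {μ : Measure Ω} [IsProbabilityMeasure μ] (s : ι → Set Ω)
    (h : ∑ i, μ.real (s i) < 1) : ∃ ω, ∀ i, ω ∉ s i := by
  by_contra! hcover
  have huniv : (⋃ i, s i) = Set.univ :=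
    Set.eq_univ_of_forall fun ω ↦ Set.mem_iUnion.2 (hcover ω)
  have := measureReal_iUnion_fintype_le (μ := μ) s
  rw [huniv, probReal_univ] at this
  linarith

theorem yao_uniform_randomized_general {P I : Type*} [Fintype P] [Fintype I]
    [Nonempty P]
    (G : P → I → ℝ) (hG : ∀ i j, G i j = 0 ∨ G i j = 1)
    (ε : ℝ) (hε : 0 < ε) (k : ℕ) (hk : 0 < k)
    (hkI : Real.log (Fintype.card I) / (2 * ε ^ 2) < k) :
    ∃ S : Fin k → P, ∀ j : I,
      (1 / k : ℝ) * ∑ m, G (S m) j <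
        (⨅ p : stdSimplex ℝ P, ⨆ j' : I, ∑ i, p.1 i * G i j') + ε := by
  let _ : MeasurableSpace P := ⊤
  obtain ⟨p, hp⟩ := exists_mem_stdSimplex_forall_le_iInf_iSup G
  set v := ⨅ p : stdSimplex ℝ P, ⨆ j' : I, ∑ i, p.1 i * G i j'
  have hbad : ∀ j, (Measure.pi fun _ : Fin k ↦ (PMF.ofStdSimplex_s7 p).toMeasure).real
      {S | v + ε ≤ (1 / k : ℝ) * ∑ m, G (S m) j} ≤ Real.exp (-(2 * k * ε ^ 2)) := by
    intro j
    refine (measureReal_mono fun S hS ↦ ?_).trans <|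
      measureReal_pi_integral_add_le_mean_le (f := fun i ↦ G i j) .of_discrete
        (fun i ↦ by rcases hG i j with h | h <;> simp [h]) hk hε.le
    rw [Set.mem_ofPred_eq, PMF.integral_ofStdSimplex_s7]
    linarith [hp j, hS.out]
  have hunion : ∑ _j : I, Real.exp (-(2 * k * ε ^ 2)) < 1 := by
    rw [sum_const, card_univ, nsmul_eq_mul, Real.exp_neg, ← div_eq_mul_inv,
      div_lt_one (Real.exp_pos _)]
    refine Real.lt_exp_of_log_lt ?_
    rw [div_lt_iff₀ (by positivity)] at hkI
    linarith
  obtain ⟨S, hS⟩ := exists_forall_notMem_of_sum_measureReal_lt_one _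
    ((sum_le_sum fun j _ ↦ hbad j).trans_lt hunion)
  exact ⟨S, fun j ↦ not_le.1 (hS j)⟩

theorem yao_uniform_randomized {P I : Type*} [Fintype P] [Fintype I]
    [Nonempty P] [Nonempty I]
    (G : P → I → ℝ) (hG : ∀ i j, G i j = 0 ∨ G i j = 1)
    (ε : ℝ) (hε : 0 < ε) (k : ℕ) (hk : 0 < k)
    (hkI : Real.log (Fintype.card I) / (2 * ε ^ 2) < k) :
    ∃ S : Fin k → P, ∀ j : I,
      (1 / k : ℝ) * ∑ m, G (S m) j <
        (⨅ p : stdSimplex ℝ P, ⨆ j' : I, ∑ i, p.1 i * G i j') + ε :=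
  yao_uniform_randomized_general G hG ε hε k hk hkI
end

section
/- Let F be a finite family of functions f : X → {0,1} on a finite set X and L : X → {0,1}. Suppose the value of the misclassification game (payoff 1 iff f(x) ≠ L(x)) is 1/2 − δ with δ > 0. Then for any k > ln|X|/(2δ²), there exist f₁,…,f_k ∈ F (with repetition) such that for every x ∈ X, strictly more than half of the f_m satisfy f_m(x) = L(x); hence the pointwise majority of f₁,…,f_k equals L on all of X. -/
open Finset
open scoped Classical

set_option maxHeartbeats 1000000 in
theorem boosting_majority {X : Type*} [Fintype X] [Nonempty X]
    (F : Finset (X → Bool)) (hF : F.Nonempty) (L : X → Bool)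
    (δ : ℝ) (hδ : 0 < δ)
    (hv : (⨅ p : stdSimplex ℝ ↥F, ⨆ x : X,
        ∑ f : ↥F, p.1 f * (if f.1 x ≠ L x then (1 : ℝ) else 0)) = 1 / 2 - δ)
    (k : ℕ) (hk : 0 < k)
    (hkX : Real.log (Fintype.card X) / (2 * δ ^ 2) < k) :
    ∃ S : Fin k → ↥F, ∀ x : X,
      k < 2 * (univ.filter fun m : Fin k => (S m).1 x = L x).card := by
  classical
  set n : ℕ := Fintype.card X with hn
  have hn1 : (1 : ℝ) ≤ (n : ℝ) := by
    have : 0 < n := Fintype.card_pos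
    exact_mod_cast this
  have hlogn : 0 ≤ Real.log n := Real.log_nonneg hn1
  have hk' : (0 : ℝ) < (k : ℝ) := by exact_mod_cast hk
  -- choose δ' with 0 < δ' < δ and log n < 2 δ'^2 k
  obtain ⟨δ', hδ'0, hδ'δ, hlogk⟩ :
      ∃ d : ℝ, 0 < d ∧ d < δ ∧ Real.log n < 2 * d ^ 2 * k := by
    set A : ℝ := Real.sqrt (Real.log n / (2 * k)) with hA
    have hA0 : 0 ≤ A := Real.sqrt_nonneg _
    have hlt1 : Real.log n < 2 * δ ^ 2 * k := by
      have := (div_lt_iff₀ (by positivity : (0:ℝ) < 2 * δ ^ 2)).mp hkX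
      nlinarith
    have hAδ : A < δ := by
      rw [hA, Real.sqrt_lt' hδ, div_lt_iff₀ (by positivity : (0:ℝ) < 2 * k)]
      nlinarith
    refine ⟨(A + δ) / 2, by linarith, by linarith, ?_⟩
    have hA2 : A ^ 2 = Real.log n / (2 * k) := Real.sq_sqrt (by positivity)
    have h2 : A ^ 2 < ((A + δ) / 2) ^ 2 := by
      apply pow_lt_pow_left₀ (by linarith) hA0
      norm_num
    rw [hA2, div_lt_iff₀ (by positivity : (0:ℝ) < 2 * k)] at h2
    nlinarith
  -- obtain a good mixed strategy p
  have hne : Nonempty (stdSimplex ℝ ↥F) := by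
    obtain ⟨f₀, hf₀⟩ := hF
    exact ⟨⟨_, ite_eq_mem_stdSimplex (𝕜 := ℝ) (⟨f₀, hf₀⟩ : ↥F)⟩⟩
  have hlt : (⨅ p : stdSimplex ℝ ↥F, ⨆ x : X,
      ∑ f : ↥F, p.1 f * (if f.1 x ≠ L x then (1 : ℝ) else 0)) < 1 / 2 - δ' := by
    rw [hv]; linarith
  obtain ⟨p, hp⟩ := exists_lt_of_ciInf_lt hlt
  set ind : X → ↥F → ℝ := fun x f => if (f : X → Bool) x ≠ L x then (1:ℝ) else 0 with hind
  have hind0 : ∀ x f, 0 ≤ ind x f := by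
    intro x f; rw [hind]; dsimp only; split <;> norm_num
  set q : X → ℝ := fun x => ∑ f : ↥F, p.1 f * ind x f with hq
  have hq0 : ∀ x, 0 ≤ q x := fun x =>
    Finset.sum_nonneg fun f _ => mul_nonneg (p.2.1 f) (hind0 x f)
  have hqle : ∀ x, q x < 1 / 2 - δ' := by
    intro x
    have h1 : q x ≤ ⨆ y : X, q y :=
      le_ciSup (Set.Finite.bddAbove (Set.finite_range _)) x
    exact lt_of_le_of_lt h1 hp
  have hδ'half : δ' < 1 / 2 := by
    have h1 := hq0 (Classical.arbitrary X)
    have h2 := hqle (Classical.arbitrary X)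
    linarith
  obtain ⟨a, ha⟩ : ∃ a : ℝ, a = 1 / 2 - δ' := ⟨_, rfl⟩
  obtain ⟨b, hb⟩ : ∃ b : ℝ, b = 1 / 2 + δ' := ⟨_, rfl⟩
  have ha0 : 0 < a := by rw [ha]; linarith
  have hb0 : 0 < b := by rw [hb]; linarith
  obtain ⟨t, htdef⟩ : ∃ t : ℝ, t = Real.log (b / a) := ⟨_, rfl⟩
  have het : Real.exp t = b / a := by rw [htdef]; exact Real.exp_log (by positivity)
  have ht0 : 0 < t := by
    rw [htdef]
    exact Real.log_pos ((one_lt_div ha0).mpr (by rw [ha, hb]; linarith))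
  have hqle' : ∀ x, q x ≤ a := fun x => by rw [ha]; exact (hqle x).le
  -- weights
  set w : (Fin k → ↥F) → ℝ := fun S => ∏ m, p.1 (S m) with hw
  have hw0 : ∀ S, 0 ≤ w S := fun S => Finset.prod_nonneg fun m _ => p.2.1 _
  have hwsum : ∑ S : Fin k → ↥F, w S = 1 := by
    rw [hw, ← Fintype.sum_pow, p.2.2]
    exact one_pow k
  set E : X → (Fin k → ↥F) → ℕ :=
    fun x S => (univ.filter fun m : Fin k => (S m).1 x ≠ L x).card with hE
  have hEcast : ∀ x S, ((E x S : ℝ)) = ∑ m : Fin k, ind x (S m) := by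
    intro x S
    simp [hE, hind, Finset.card_filter]
  -- the MGF identity
  have key : ∀ x, ∑ S : Fin k → ↥F, w S * Real.exp (t * (E x S)) =
      ((1 - q x) + q x * Real.exp t) ^ k := by
    intro x
    have hterm : ∀ S : Fin k → ↥F, w S * Real.exp (t * (E x S)) =
        ∏ m : Fin k, (p.1 (S m) * Real.exp (t * ind x (S m))) := by
      intro S
      rw [Finset.prod_mul_distrib, hw]
      congr 1
      rw [← Real.exp_sum]
      congr 1
      rw [hEcast x S, Finset.mul_sum]
    have h1 : ∑ S : Fin k → ↥F, w S * Real.exp (t * (E x S)) =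
        ∑ S : Fin k → ↥F, ∏ m : Fin k, (p.1 (S m) * Real.exp (t * ind x (S m))) :=
      Finset.sum_congr rfl fun S _ => hterm S
    rw [h1, ← Fintype.sum_pow (fun f : ↥F => p.1 f * Real.exp (t * ind x f)) k]
    congr 1
    have hsplit : ∀ f : ↥F, p.1 f * Real.exp (t * ind x f) =
        p.1 f + p.1 f * ind x f * (Real.exp t - 1) := by
      intro f
      rw [hind]; dsimp only
      split
      · rw [mul_one]; ring
      · rw [mul_zero, Real.exp_zero]; ring
    rw [Finset.sum_congr rfl fun f _ => hsplit f]
    rw [Finset.sum_add_distrib, p.2.2, ← Finset.sum_mul]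
    simp only [hq]
    ring
  have hane : a ≠ 0 := ne_of_gt ha0
  have hmgf : ∀ x, (1 - q x) + q x * Real.exp t ≤ 1 + 2 * δ' := by
    intro x
    have het1 : 1 ≤ Real.exp t := Real.one_le_exp ht0.le
    have h2 : q x * (Real.exp t - 1) ≤ a * (Real.exp t - 1) :=
      mul_le_mul_of_nonneg_right (hqle' x) (by linarith)
    have h3 : a * (Real.exp t - 1) = 2 * δ' := by
      rw [het]
      field_simp
      rw [ha, hb]; ring
    nlinarith [h2, h3]
  have hmgf0 : ∀ x, 0 ≤ (1 - q x) + q x * Real.exp t := by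
    intro x
    have h1 := hqle x
    have h2 := mul_nonneg (hq0 x) (Real.exp_pos t).le
    linarith
  obtain ⟨r, hr⟩ : ∃ r : ℝ, r = (1 + 2 * δ') * Real.exp (-(t / 2)) := ⟨_, rfl⟩
  have hr0 : 0 ≤ r := by rw [hr]; exact mul_nonneg (by linarith) (Real.exp_pos _).le
  have hexp2 : Real.exp (-(t / 2)) ^ 2 = a / b := by
    rw [pow_two, ← Real.exp_add, show -(t / 2) + -(t / 2) = -t by ring, Real.exp_neg, het,
      inv_div]
  have hbne : b ≠ 0 := ne_of_gt hb0
  have hr2 : r ^ 2 = 1 - 4 * δ' ^ 2 := by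
    rw [hr, mul_pow, hexp2]
    rw [ha, hb]
    have h5 : (1 / 2 + δ' : ℝ) ≠ 0 := by linarith
    field_simp
    ring
  have hrle : r ≤ Real.exp (-(2 * δ' ^ 2)) := by
    have h4 : r ^ 2 ≤ Real.exp (-(2 * δ' ^ 2)) ^ 2 := by
      have h6 : Real.exp (-(2 * δ' ^ 2)) ^ 2 = Real.exp (-(4 * δ' ^ 2)) := by
        rw [← Real.exp_nat_mul]; congr 1; push_cast; ring
      rw [hr2, h6]
      have h5 := Real.add_one_le_exp (-(4 * δ' ^ 2))
      linarith
    calc r = Real.sqrt (r ^ 2) := (Real.sqrt_sq hr0).symm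
      _ ≤ Real.sqrt (Real.exp (-(2 * δ' ^ 2)) ^ 2) := Real.sqrt_le_sqrt h4
      _ = Real.exp (-(2 * δ' ^ 2)) := Real.sqrt_sq (Real.exp_pos _).le
  -- union bound per point
  have hbad : ∀ x, (∑ S : Fin k → ↥F, if k ≤ 2 * E x S then w S else 0) ≤ r ^ k := by
    intro x
    have step1 : ∀ S : Fin k → ↥F, (if k ≤ 2 * E x S then w S else 0) ≤
        Real.exp (-(t / 2)) ^ k * (w S * Real.exp (t * (E x S))) := by
      intro S
      have hnonneg : 0 ≤ Real.exp (-(t / 2)) ^ k * (w S * Real.exp (t * (E x S))) := by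
        have := hw0 S
        positivity
      split
      · rename_i hS
        have hE' : (k : ℝ) ≤ 2 * (E x S : ℝ) := by exact_mod_cast hS
        have h1 : (1 : ℝ) ≤ Real.exp ((k : ℝ) * (-(t / 2)) + t * (E x S)) := by
          apply Real.one_le_exp
          nlinarith
        calc w S = w S * 1 := (mul_one _).symm
          _ ≤ w S * Real.exp ((k : ℝ) * (-(t / 2)) + t * (E x S)) :=
              mul_le_mul_of_nonneg_left h1 (hw0 S)
          _ = Real.exp (-(t / 2)) ^ k * (w S * Real.exp (t * (E x S))) := by
              rw [Real.exp_add, ← Real.exp_nat_mul]; ring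
      · exact hnonneg
    calc (∑ S : Fin k → ↥F, if k ≤ 2 * E x S then w S else 0)
        ≤ ∑ S : Fin k → ↥F, Real.exp (-(t / 2)) ^ k * (w S * Real.exp (t * (E x S))) :=
          Finset.sum_le_sum fun S _ => step1 S
      _ = Real.exp (-(t / 2)) ^ k * ∑ S : Fin k → ↥F, w S * Real.exp (t * (E x S)) := by
          rw [Finset.mul_sum]
      _ = Real.exp (-(t / 2)) ^ k * ((1 - q x) + q x * Real.exp t) ^ k := by rw [key x]
      _ ≤ Real.exp (-(t / 2)) ^ k * (1 + 2 * δ') ^ k := by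
          apply mul_le_mul_of_nonneg_left _ (by positivity)
          exact pow_le_pow_left₀ (hmgf0 x) (hmgf x) k
      _ = r ^ k := by rw [hr, mul_pow]; ring
  -- conclude by contradiction
  by_contra hcon
  push_neg at hcon
  have hbadmem : ∀ S : Fin k → ↥F, ∃ x, k ≤ 2 * E x S := by
    intro S
    obtain ⟨x, hx⟩ := hcon S
    refine ⟨x, ?_⟩
    have hsplit := Finset.card_filter_add_card_filter_not
      (s := (univ : Finset (Fin k))) (p := fun m : Fin k => (S m).1 x = L x)
    rw [Finset.card_univ, Fintype.card_fin] at hsplit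
    have hEeq : E x S = (univ.filter fun m : Fin k => ¬ ((S m).1 x = L x)).card := by
      simp [hE]
    omega
  have h1 : (1 : ℝ) ≤ ∑ x : X, ∑ S : Fin k → ↥F, if k ≤ 2 * E x S then w S else 0 := by
    calc (1 : ℝ) = ∑ S : Fin k → ↥F, w S := hwsum.symm
      _ ≤ ∑ S : Fin k → ↥F, ∑ x : X, (if k ≤ 2 * E x S then w S else 0) := by
          apply Finset.sum_le_sum
          intro S _
          obtain ⟨x, hx⟩ := hbadmem S
          calc w S = if k ≤ 2 * E x S then w S else 0 := by rw [if_pos hx]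
            _ ≤ ∑ y : X, (if k ≤ 2 * E y S then w S else 0) := by
                apply Finset.single_le_sum
                  (f := fun y : X => if k ≤ 2 * E y S then w S else 0) _ (Finset.mem_univ x)
                intro y _
                by_cases hy : k ≤ 2 * E y S <;> simp [hy, hw0 S]
      _ = ∑ x : X, ∑ S : Fin k → ↥F, (if k ≤ 2 * E x S then w S else 0) :=
          Finset.sum_comm
  have h2 : (∑ x : X, ∑ S : Fin k → ↥F, if k ≤ 2 * E x S then w S else 0)
      ≤ (n : ℝ) * r ^ k := by
    calc (∑ x : X, ∑ S : Fin k → ↥F, if k ≤ 2 * E x S then w S else 0)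
        ≤ ∑ _x : X, r ^ k := Finset.sum_le_sum fun x _ => hbad x
      _ = (n : ℝ) * r ^ k := by
          rw [Finset.sum_const, Finset.card_univ, nsmul_eq_mul, hn]
  have h3 : (n : ℝ) * r ^ k < 1 := by
    have hrk : r ^ k ≤ Real.exp (-(2 * δ' ^ 2 * k)) := by
      calc r ^ k ≤ Real.exp (-(2 * δ' ^ 2)) ^ k := pow_le_pow_left₀ hr0 hrle k
        _ = Real.exp (-(2 * δ' ^ 2 * k)) := by
            rw [← Real.exp_nat_mul]; congr 1; ring
    have hn0 : (0 : ℝ) < n := by linarith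
    have hnlt : (n : ℝ) < Real.exp (2 * δ' ^ 2 * k) := by
      rw [← Real.exp_log hn0]
      exact Real.exp_lt_exp.mpr (by linarith)
    calc (n : ℝ) * r ^ k ≤ (n : ℝ) * Real.exp (-(2 * δ' ^ 2 * k)) :=
          mul_le_mul_of_nonneg_left hrk (by linarith)
      _ < Real.exp (2 * δ' ^ 2 * k) * Real.exp (-(2 * δ' ^ 2 * k)) :=
          mul_lt_mul_of_pos_right hnlt (Real.exp_pos _)
      _ = 1 := by rw [← Real.exp_add, add_neg_cancel, Real.exp_zero]
  linarith
end

section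
/- Let M : Fin r → Fin c → ℝ be any matrix. Then min over probability distributions p on Fin r of (max over j of Σ_i p(i) M_{i,j}) equals max over probability distributions q on Fin c of (min over i of Σ_j q(j) M_{i,j}). -/
/-!
Weak duality holds because, for mixed strategies `p` and `q`, both `⨅ i, (M q) i` and
`⨆ j, (p M) j` bound the expected payoff `∑ i j, p i * M i j * q j` from the appropriate side.
Conversely, if no column strategy guarantees `v`, the constant vector `v` lies outside the
compact convex set `{M q | q ∈ Δ}` plus the nonpositive orthant. A functional separating them
has nonnegative coordinates, because that set is closed under decreasing any coordinate;
normalised, it is a row strategy keeping every column below `v`.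
-/

open Finset Pointwise

variable {ι κ : Type*}

theorem StrongDual.apply_single_nonneg [DecidableEq ι] {f : StrongDual ℝ (ι → ℝ)} {y : ι → ℝ}
    {u : ℝ} (h : ∀ z ≤ 0, f (y + z) < u) (i : ι) : 0 ≤ f (Pi.single i 1) := by
  by_contra! hi
  have hy : f y < u := by simpa using h 0 le_rfl
  set t := (u - f y) / -f (Pi.single i 1)
  have ht : 0 ≤ t := div_nonneg (by linarith) (by linarith)
  have hz : -t • (Pi.single i 1 : ι → ℝ) ≤ 0 := by
    intro j
    by_cases hj : j = i
    · subst hj; simpa using ht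
    · simp [hj]
  have hft : t * -f (Pi.single i 1) = u - f y := div_mul_cancel₀ _ (neg_ne_zero.2 hi.ne)
  have := h _ hz
  rw [map_add, map_smul, smul_eq_mul] at this
  linarith

variable [Fintype ι] [Fintype κ]

theorem StrongDual.apply_eq_sum_mul [DecidableEq ι] (f : StrongDual ℝ (ι → ℝ)) (x : ι → ℝ) :
    f x = ∑ i, f (Pi.single i 1) * x i := by
  conv_lhs => rw [pi_eq_sum_univ x, map_sum]
  refine sum_congr rfl fun i _ => ?_
  rw [map_smul, smul_eq_mul, mul_comm]
  congr 2
  ext j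
  simp [Pi.single_apply, eq_comm]

theorem sum_mul_le_ciSup_of_mem_stdSimplex {p : ι → ℝ} (hp : p ∈ stdSimplex ℝ ι) (f : ι → ℝ) :
    ∑ i, p i * f i ≤ ⨆ i, f i :=
  calc ∑ i, p i * f i ≤ ∑ i, p i * ⨆ i, f i := sum_le_sum fun i _ =>
        mul_le_mul_of_nonneg_left (le_ciSup (Set.finite_range f).bddAbove i) (hp.1 i)
    _ = ⨆ i, f i := by rw [← sum_mul, hp.2, one_mul]

theorem ciInf_le_sum_mul_of_mem_stdSimplex {p : ι → ℝ} (hp : p ∈ stdSimplex ℝ ι) (f : ι → ℝ) :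
    ⨅ i, f i ≤ ∑ i, p i * f i :=
  calc ⨅ i, f i = ∑ i, p i * ⨅ i, f i := by rw [← sum_mul, hp.2, one_mul]
    _ ≤ ∑ i, p i * f i := sum_le_sum fun i _ =>
        mul_le_mul_of_nonneg_left (ciInf_le (Set.finite_range f).bddBelow i) (hp.1 i)

theorem ciInf_sum_mul_le_ciSup_sum_mul (M : ι → κ → ℝ) {p : ι → ℝ} {q : κ → ℝ}
    (hp : p ∈ stdSimplex ℝ ι) (hq : q ∈ stdSimplex ℝ κ) :
    ⨅ i, ∑ j, q j * M i j ≤ ⨆ j, ∑ i, p i * M i j :=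
  calc ⨅ i, ∑ j, q j * M i j ≤ ∑ i, p i * ∑ j, q j * M i j :=
        ciInf_le_sum_mul_of_mem_stdSimplex hp _
    _ = ∑ j, q j * ∑ i, p i * M i j := by
        simp only [mul_sum]
        rw [sum_comm]
        exact sum_congr rfl fun _ _ => sum_congr rfl fun _ _ => mul_left_comm _ _ _
    _ ≤ ⨆ j, ∑ i, p i * M i j := sum_mul_le_ciSup_of_mem_stdSimplex hq _

theorem exists_mem_stdSimplex_sum_mul_lt {K : Set (ι → ℝ)} (hconv : Convex ℝ K)
    (hcpt : IsCompact K) (hne : K.Nonempty) {x : ι → ℝ} (hx : x ∉ K + Set.Iic 0) :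
    ∃ p ∈ stdSimplex ℝ ι, ∀ y ∈ K, ∑ i, p i * y i < ∑ i, p i * x i := by
  classical
  obtain ⟨f, u, hfK, hux⟩ := geometric_hahn_banach_closed_point
    (hconv.add (convex_Iic 0)) (isClosed_Iic.add_left_of_isCompact hcpt) hx
  have hK : K ⊆ K + Set.Iic 0 := Set.subset_add_left K (Set.mem_Iic.2 le_rfl)
  have hlt : ∀ y ∈ K, f y < f x := fun y hy => (hfK y (hK hy)).trans hux
  obtain ⟨y₀, hy₀⟩ := hne
  have hw : ∀ i, 0 ≤ f (Pi.single i 1) :=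
    StrongDual.apply_single_nonneg fun z hz => hfK _ (Set.add_mem_add hy₀ hz)
  have hw_sum : 0 < ∑ i, f (Pi.single i 1) := by
    refine (sum_nonneg fun i _ => hw i).lt_of_ne fun h => (hlt y₀ hy₀).ne ?_
    have hw0 : ∀ i, f (Pi.single i 1) = 0 := fun i =>
      (sum_eq_zero_iff_of_nonneg fun i _ => hw i).1 h.symm i (mem_univ i)
    rw [StrongDual.apply_eq_sum_mul f y₀, StrongDual.apply_eq_sum_mul f x]
    simp only [hw0, zero_mul]
  refine ⟨fun i => f (Pi.single i 1) / ∑ i, f (Pi.single i 1),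
    ⟨fun i => div_nonneg (hw i) hw_sum.le, ?_⟩, fun y hy => ?_⟩
  · rw [← sum_div, div_self hw_sum.ne']
  · simp only [div_mul_eq_mul_div, ← sum_div, ← StrongDual.apply_eq_sum_mul]
    exact div_lt_div_of_pos_right (hlt y hy) hw_sum

theorem exists_stdSimplex_le_or_exists_stdSimplex_lt [Nonempty κ] (M : ι → κ → ℝ) (v : ℝ) :
    (∃ q ∈ stdSimplex ℝ κ, ∀ i, v ≤ ∑ j, q j * M i j) ∨
      ∃ p ∈ stdSimplex ℝ ι, ∀ j, ∑ i, p i * M i j < v := by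
  classical
  set T := Matrix.vecMulLinear (Matrix.of M).transpose
  by_cases hv : (fun _ => v) ∈ T '' stdSimplex ℝ κ + Set.Iic 0
  · obtain ⟨_, ⟨q, hq, rfl⟩, z, hz, hsum⟩ := hv
    refine .inl ⟨q, hq, fun i => ?_⟩
    have hi : T q i + z i = v := congrFun hsum i
    have hTq : T q i = ∑ j, q j * M i j := rfl
    have hzi : z i ≤ 0 := Set.mem_Iic.1 hz i
    linarith
  · obtain ⟨p, hp, hlt⟩ := exists_mem_stdSimplex_sum_mul_lt
      ((convex_stdSimplex ℝ κ).linear_image T)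
      ((isCompact_stdSimplex ℝ κ).image T.continuous_of_finiteDimensional)
      ((Set.nonempty_coe_sort.1 inferInstance).image T) hv
    refine .inr ⟨p, hp, fun j => ?_⟩
    simpa [T, ← sum_mul, hp.2] using hlt _ ⟨_, single_mem_stdSimplex ℝ j, rfl⟩

theorem ciInf_ciSup_sum_mul_eq_ciSup_ciInf_sum_mul [Nonempty ι] [Nonempty κ] (M : ι → κ → ℝ) :
    (⨅ p : stdSimplex ℝ ι, ⨆ j, ∑ i, p.1 i * M i j) =
      ⨆ q : stdSimplex ℝ κ, ⨅ i, ∑ j, q.1 j * M i j := by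
  obtain ⟨p₀⟩ : Nonempty (stdSimplex ℝ ι) := inferInstance
  obtain ⟨q₀⟩ : Nonempty (stdSimplex ℝ κ) := inferInstance
  have hbdd_below : BddBelow (Set.range fun p : stdSimplex ℝ ι => ⨆ j, ∑ i, p.1 i * M i j) :=
    ⟨_, Set.forall_mem_range.2 fun p => ciInf_sum_mul_le_ciSup_sum_mul M p.2 q₀.2⟩
  have hbdd_above : BddAbove (Set.range fun q : stdSimplex ℝ κ => ⨅ i, ∑ j, q.1 j * M i j) :=
    ⟨_, Set.forall_mem_range.2 fun q => ciInf_sum_mul_le_ciSup_sum_mul M p₀.2 q.2⟩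
  refine le_antisymm (le_of_forall_gt fun v hv => ?_)
    (ciSup_le fun q => le_ciInf fun p => ciInf_sum_mul_le_ciSup_sum_mul M p.2 q.2)
  rcases exists_stdSimplex_le_or_exists_stdSimplex_lt M v with ⟨q, hq, hle⟩ | ⟨p, hp, hlt⟩
  · exact absurd ((le_ciInf hle).trans (le_ciSup hbdd_above ⟨q, hq⟩)) hv.not_ge
  · obtain ⟨j, hj⟩ := exists_eq_ciSup_of_finite (f := fun j => ∑ i, p i * M i j)
    exact (ciInf_le hbdd_below ⟨p, hp⟩).trans_lt (hj ▸ hlt j)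

theorem von_neumann_minimax (r c : ℕ) (hr : 0 < r) (hc : 0 < c)
    (M : Fin r → Fin c → ℝ) :
    (⨅ p : stdSimplex ℝ (Fin r), ⨆ j : Fin c, ∑ i, p.1 i * M i j) =
      ⨆ q : stdSimplex ℝ (Fin c), ⨅ i : Fin r, ∑ j, q.1 j * M i j := by
  have : Nonempty (Fin r) := Fin.pos_iff_nonempty.1 hr
  have : Nonempty (Fin c) := Fin.pos_iff_nonempty.1 hc
  exact ciInf_ciSup_sum_mul_eq_ciSup_ciInf_sum_mul M
end

section
/- For every ε > 0, every finite nonempty sets P, I, and every G : P × I → [0,1], if k > ln|I|/(2ε²) and k' > ln|P|/(2ε²), then there exist a multiset S of k elements of P and a multiset T of k' elements of I such that max_j (1/k)Σ_{i∈S} G(i,j) − min_i (1/k')Σ_{j∈T} G(i,j) < 2ε. -/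
/-!
The multisets come from Hedge with best responses: in round `t` the row player best-responds to
the distribution on columns proportional to `exp (η · payoff accumulated so far)`, and the column
player does the same in the game `1 - Gᵀ`. By Hoeffding's lemma the log-partition function grows
by at most `η v_t + η² / 8` in round `t`, where `v_t` is the payoff of that round, so every
column's average payoff exceeds the average of the `v_t` by at most `log |I| / (k η) + η / 8`.
A best response to `y` pays at most what `y` pays against any mixed strategy `x`, so a round value
of one player plus one of the other is at most `1`. The two regret bounds therefore add up, and
`η = 4 ε` makes the total `< 2 ε`.
-/

open Finset MeasureTheory ProbabilityTheory

lemma integral_sum_smul_dirac {ι : Type*} [Fintype ι] {y : ι → ℝ} (hy : ∀ j, 0 ≤ y j)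
    (g : ι → ℝ) (f : ℝ → ℝ) :
    ∫ x, f x ∂(∑ j, ENNReal.ofReal (y j) • Measure.dirac (g j)) = ∑ j, y j * f (g j) := by
  rw [integral_finsetSum_measure]
  · simp [hy]
  exact fun _ _ ↦ (integrable_dirac (by simp)).smul_measure (by simp)

/-- Hoeffding's lemma for the law `∑ j, y j • δ (g j)`. -/
lemma sum_mul_exp_le_of_mem_Icc {ι : Type*} [Fintype ι] {y : ι → ℝ} (hy : ∀ j, 0 ≤ y j)
    (hy1 : ∑ j, y j = 1) {g : ι → ℝ} (hg : ∀ j, g j ∈ Set.Icc (0 : ℝ) 1) (t : ℝ) :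
    ∑ j, y j * Real.exp (t * g j) ≤ Real.exp (t * ∑ j, y j * g j + t ^ 2 / 8) := by
  set μ : Measure ℝ := ∑ j, ENNReal.ofReal (y j) • Measure.dirac (g j)
  have : IsProbabilityMeasure μ := ⟨by
    simp [μ, ← ENNReal.ofReal_sum_of_nonneg fun j _ ↦ hy j, hy1]⟩
  have hIcc : ∀ᵐ x ∂μ, id x ∈ Set.Icc (0 : ℝ) 1 := by
    simpa [μ, ae_iff, Measure.dirac_apply] using fun j ↦ Or.inr (hg j)
  have hoeffding := (hasSubgaussianMGF_of_mem_Icc aemeasurable_id hIcc).mgf_le t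
  simp only [mgf, μ, integral_sum_smul_dirac hy, id, mul_sub, Real.exp_sub, ← sum_div,
    ← mul_div_assoc] at hoeffding
  rw [div_le_iff₀ (Real.exp_pos _), ← Real.exp_add] at hoeffding
  refine hoeffding.trans_eq (congrArg Real.exp ?_)
  norm_num
  ring

section Hedge

variable {B : Type*} [Fintype B]

noncomputable def expWeights (η : ℝ) (c : B → ℝ) (j : B) : ℝ :=
  Real.exp (η * c j) / ∑ j', Real.exp (η * c j')

lemma expWeights_nonneg (η : ℝ) (c : B → ℝ) (j : B) : 0 ≤ expWeights η c j := by
  unfold expWeights; positivity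

variable [Nonempty B]

lemma sum_expWeights (η : ℝ) (c : B → ℝ) : ∑ j, expWeights η c j = 1 := by
  simp only [expWeights, ← Finset.sum_div]
  exact div_self (Finset.sum_pos (fun j _ ↦ Real.exp_pos _) univ_nonempty).ne'

lemma hedge_log_partition_le (x : ℕ → B → ℝ) (hx : ∀ t j, x t j ∈ Set.Icc (0 : ℝ) 1)
    (η : ℝ) (N : ℕ) :
    Real.log (∑ j, Real.exp (η * ∑ t ∈ range N, x t j)) ≤
      Real.log (Fintype.card B) +
        η * ∑ t ∈ range N, ∑ j, expWeights η (fun j ↦ ∑ s ∈ range t, x s j) j * x t j +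
        N * (η ^ 2 / 8) := by
  induction N with
  | zero => simp
  | succ n ih =>
    set c : B → ℝ := fun j ↦ ∑ s ∈ range n, x s j
    set Z := ∑ j, Real.exp (η * c j)
    have hZ : 0 < Z := Finset.sum_pos (fun j _ ↦ Real.exp_pos _) univ_nonempty
    have hfactor : ∑ j, Real.exp (η * ∑ t ∈ range (n + 1), x t j) =
        Z * ∑ j, expWeights η c j * Real.exp (η * x n j) := by
      rw [Finset.mul_sum]
      refine Finset.sum_congr rfl fun j _ ↦ ?_
      rw [expWeights, sum_range_succ, mul_add, Real.exp_add]
      field_simp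
      exact mul_comm _ _
    have hstep :=
      sum_mul_exp_le_of_mem_Icc (expWeights_nonneg η c) (sum_expWeights η c) (hx n) η
    calc _ ≤ Real.log (Z * Real.exp (η * ∑ j, expWeights η c j * x n j + η ^ 2 / 8)) := by
          rw [hfactor]
          exact Real.log_le_log (Finset.sum_pos (fun j _ ↦ Real.exp_pos _) univ_nonempty
            |>.trans_eq hfactor) (by gcongr)
      _ ≤ _ := by
          rw [Real.log_mul hZ.ne' (Real.exp_ne_zero _), Real.log_exp, sum_range_succ]
          push_cast
          linarith

theorem hedge_regret (x : ℕ → B → ℝ) (hx : ∀ t j, x t j ∈ Set.Icc (0 : ℝ) 1) {η : ℝ}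
    (hη : 0 < η) (N : ℕ) (j : B) :
    ∑ t ∈ range N, x t j ≤ Real.log (Fintype.card B) / η +
      ∑ t ∈ range N, ∑ j, expWeights η (fun j ↦ ∑ s ∈ range t, x s j) j * x t j +
      N * η / 8 := by
  have hj :
      η * ∑ t ∈ range N, x t j ≤ Real.log (∑ j, Real.exp (η * ∑ t ∈ range N, x t j)) := by
    rw [Real.le_log_iff_exp_le (Finset.sum_pos (fun j _ ↦ Real.exp_pos _) univ_nonempty)]
    exact single_le_sum (f := fun j ↦ Real.exp (η * ∑ t ∈ range N, x t j))
      (fun j _ ↦ (Real.exp_pos _).le) (mem_univ j)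
  have := hj.trans (hedge_log_partition_le x hx η N)
  rw [← mul_le_mul_iff_of_pos_left hη]
  field_simp
  linarith

end Hedge

section BestResponse

variable {A B : Type*} [Finite A] [Nonempty A] [Fintype B]

noncomputable def bestResponse (H : A → B → ℝ) (w : B → ℝ) : A :=
  (Finite.exists_min fun i ↦ ∑ j, w j * H i j).choose

lemma sum_mul_bestResponse_le (H : A → B → ℝ) (w : B → ℝ) (i : A) :
    ∑ j, w j * H (bestResponse H w) j ≤ ∑ j, w j * H i j :=
  (Finite.exists_min fun i ↦ ∑ j, w j * H i j).choose_spec i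

end BestResponse

section HedgeDynamics

variable {A B : Type*} [Finite A] [Nonempty A] [Fintype B]

noncomputable def hedgeCumulative (H : A → B → ℝ) (η : ℝ) : ℕ → B → ℝ
  | 0 => 0
  | t + 1 =>
    hedgeCumulative H η t + H (bestResponse H (expWeights η (hedgeCumulative H η t)))

noncomputable def hedgeResponse (H : A → B → ℝ) (η : ℝ) (t : ℕ) : A :=
  bestResponse H (expWeights η (hedgeCumulative H η t))

noncomputable def hedgeValue (H : A → B → ℝ) (η : ℝ) (t : ℕ) : ℝ :=
  ∑ j, expWeights η (hedgeCumulative H η t) j * H (hedgeResponse H η t) j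

lemma hedgeCumulative_eq_sum (H : A → B → ℝ) (η : ℝ) (t : ℕ) :
    hedgeCumulative H η t = fun j ↦ ∑ s ∈ range t, H (hedgeResponse H η s) j := by
  induction t with
  | zero => rfl
  | succ t ih =>
    funext j
    change hedgeCumulative H η t j + H (hedgeResponse H η t) j = _
    rw [ih, sum_range_succ]

theorem hedgeResponse_average_le [Nonempty B] {H : A → B → ℝ}
    (hH : ∀ i j, H i j ∈ Set.Icc (0 : ℝ) 1) {η : ℝ} (hη : 0 < η) {N : ℕ} (hN : 0 < N)
    (j : B) :
    (1 / N : ℝ) * ∑ m : Fin N, H (hedgeResponse H η m) j ≤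
      Real.log (Fintype.card B) / (N * η) + (∑ t ∈ range N, hedgeValue H η t) / N + η / 8 := by
  have hregret := hedge_regret (fun t ↦ H (hedgeResponse H η t)) (fun t ↦ hH _) hη N j
  simp only [← hedgeCumulative_eq_sum] at hregret
  rw [Fin.sum_univ_eq_sum_range (fun t ↦ H (hedgeResponse H η t) j)]
  have hN' : (N : ℝ) ≠ 0 := by positivity
  calc _ ≤ (1 / N : ℝ) *
        (Real.log (Fintype.card B) / η + ∑ t ∈ range N, hedgeValue H η t + N * η / 8) := by
        gcongr; exact hregret
    _ = _ := by field_simp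

end HedgeDynamics

lemma le_sum_mul_of_forall_le {ι : Type*} [Fintype ι] {w f : ι → ℝ} {a : ℝ}
    (hw : ∀ i, 0 ≤ w i) (hw1 : ∑ i, w i = 1) (h : ∀ i, a ≤ f i) : a ≤ ∑ i, w i * f i :=
  calc a = ∑ i, w i * a := by rw [← sum_mul, hw1, one_mul]
    _ ≤ ∑ i, w i * f i := sum_le_sum fun i _ ↦ mul_le_mul_of_nonneg_left (h i) (hw i)

lemma sum_div_add_sum_div_le {a b : ℕ → ℝ} {c : ℝ} (h : ∀ t s, a t + b s ≤ c) {k k' : ℕ}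
    (hk : 0 < k) (hk' : 0 < k') :
    (∑ t ∈ range k, a t) / k + (∑ s ∈ range k', b s) / k' ≤ c := by
  obtain ⟨t₀, -, ht₀⟩ := exists_max_image (range k) a (nonempty_range_iff.2 hk.ne')
  obtain ⟨s₀, -, hs₀⟩ := exists_max_image (range k') b (nonempty_range_iff.2 hk'.ne')
  have hat : (∑ t ∈ range k, a t) / k ≤ a t₀ := by
    rw [div_le_iff₀ (by positivity), mul_comm]
    simpa using sum_le_card_nsmul (range k) a (a t₀) ht₀
  have hbs : (∑ s ∈ range k', b s) / k' ≤ b s₀ := by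
    rw [div_le_iff₀ (by positivity), mul_comm]
    simpa using sum_le_card_nsmul (range k') b (b s₀) hs₀
  linarith [h t₀ s₀]

section SelfPlay

variable {A B : Type*} [Fintype A] [Nonempty A] [Fintype B] [Nonempty B]

lemma bestResponse_add_bestResponse_compl_le_one (G : A → B → ℝ) {x : A → ℝ} {y : B → ℝ}
    (hx : ∀ i, 0 ≤ x i) (hx1 : ∑ i, x i = 1) (hy : ∀ j, 0 ≤ y j) (hy1 : ∑ j, y j = 1) :
    ∑ j, y j * G (bestResponse G y) j +
      ∑ i, x i * (1 - G i (bestResponse (fun j i ↦ 1 - G i j) x)) ≤ 1 := by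
  have hrow : ∑ j, y j * G (bestResponse G y) j ≤ ∑ i, x i * ∑ j, y j * G i j :=
    le_sum_mul_of_forall_le hx hx1 (sum_mul_bestResponse_le G y)
  have hcol : ∑ i, x i * (1 - G i (bestResponse (fun j i ↦ 1 - G i j) x)) ≤
      ∑ j, y j * ∑ i, x i * (1 - G i j) :=
    le_sum_mul_of_forall_le hy hy1 (sum_mul_bestResponse_le (fun j i ↦ 1 - G i j) x)
  have hsum : ∑ j, y j * ∑ i, x i * (1 - G i j) = 1 - ∑ i, x i * ∑ j, y j * G i j := by
    simp only [mul_sub, mul_one, sum_sub_distrib, hx1, hy1, mul_sum]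
    rw [sum_comm]
    simp only [mul_left_comm]
  linarith

lemma hedgeValue_add_hedgeValue_compl_le_one (G : A → B → ℝ) (η : ℝ) (t s : ℕ) :
    hedgeValue G η t + hedgeValue (fun j i ↦ 1 - G i j) η s ≤ 1 :=
  bestResponse_add_bestResponse_compl_le_one G (expWeights_nonneg η _) (sum_expWeights η _)
    (expWeights_nonneg η _) (sum_expWeights η _)

theorem le_hedgeResponse_compl_average (G : A → B → ℝ) (hG : ∀ i j, G i j ∈ Set.Icc (0 : ℝ) 1)
    {η : ℝ} (hη : 0 < η) {N : ℕ} (hN : 0 < N) (i : A) :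
    1 - (Real.log (Fintype.card A) / (N * η) +
        (∑ t ∈ range N, hedgeValue (fun j i ↦ 1 - G i j) η t) / N + η / 8) ≤
      (1 / N : ℝ) * ∑ n : Fin N, G i (hedgeResponse (fun j i ↦ 1 - G i j) η n) := by
  have hGc : ∀ j i, 1 - G i j ∈ Set.Icc (0 : ℝ) 1 :=
    fun j i ↦ ⟨by linarith [(hG i j).2], by linarith [(hG i j).1]⟩
  have := hedgeResponse_average_le hGc hη hN i
  simp only [sum_sub_distrib, sum_const, card_univ, Fintype.card_fin, nsmul_eq_mul,
    mul_sub] at this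
  field_simp at this ⊢
  linarith

end SelfPlay

lemma pos_of_log_div_lt {n k : ℕ} {c : ℝ} (hc : 0 ≤ c) (h : Real.log n / c < k) : 0 < k := by
  exact_mod_cast (div_nonneg (Real.log_natCast_nonneg n) hc).trans_lt h

lemma div_lt_half_of_div_two_sq_lt {L ε x : ℝ} (hε : 0 < ε) (hx : 0 < x)
    (h : L / (2 * ε ^ 2) < x) : L / (x * (4 * ε)) < ε / 2 := by
  rw [div_lt_iff₀ (by positivity)] at h ⊢
  linarith

theorem two_sided_simple_strategies_general {P I : Type*} [Fintype P] [Fintype I]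
    [Nonempty P] [Nonempty I]
    (G : P → I → ℝ) (hG : ∀ i j, G i j ∈ Set.Icc (0 : ℝ) 1)
    (ε : ℝ) (hε : 0 < ε) (k k' : ℕ)
    (hkI : Real.log (Fintype.card I) / (2 * ε ^ 2) < k)
    (hkP : Real.log (Fintype.card P) / (2 * ε ^ 2) < k') :
    ∃ S : Fin k → P, ∃ T : Fin k' → I,
      (⨆ j : I, (1 / k : ℝ) * ∑ m, G (S m) j) -
        (⨅ i : P, (1 / k' : ℝ) * ∑ n, G i (T n)) < 2 * ε := by
  have hk : 0 < k := pos_of_log_div_lt (by positivity) hkI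
  have hk' : 0 < k' := pos_of_log_div_lt (by positivity) hkP
  have hη : 0 < 4 * ε := by positivity
  refine ⟨fun m ↦ hedgeResponse G (4 * ε) m,
    fun n ↦ hedgeResponse (fun j i ↦ 1 - G i j) (4 * ε) n, ?_⟩
  have hsup := ciSup_le (hedgeResponse_average_le hG hη hk)
  have hinf := le_ciInf (le_hedgeResponse_compl_average G hG hη hk')
  have hvalues :=
    sum_div_add_sum_div_le (hedgeValue_add_hedgeValue_compl_le_one G (4 * ε)) hk hk'
  have hI := div_lt_half_of_div_two_sq_lt hε (by positivity) hkI
  have hP := div_lt_half_of_div_two_sq_lt hε (by positivity) hkP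
  linarith

theorem two_sided_simple_strategies {P I : Type*} [Fintype P] [Fintype I]
    [Nonempty P] [Nonempty I]
    (G : P → I → ℝ) (hG : ∀ i j, G i j ∈ Set.Icc (0 : ℝ) 1)
    (ε : ℝ) (hε : 0 < ε) (k k' : ℕ) (hk : 0 < k) (hk' : 0 < k')
    (hkI : Real.log (Fintype.card I) / (2 * ε ^ 2) < k)
    (hkP : Real.log (Fintype.card P) / (2 * ε ^ 2) < k') :
    ∃ S : Fin k → P, ∃ T : Fin k' → I,
      (⨆ j : I, (1 / k : ℝ) * ∑ m, G (S m) j) -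
        (⨅ i : P, (1 / k' : ℝ) * ∑ n, G i (T n)) < 2 * ε :=
  two_sided_simple_strategies_general G hG ε hε k k' hkI hkP
end
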